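/- Let n ≥ 2 and σ ≥ 3/2, and suppose C > 0 is a constant such that for every bounded convex domain Ω ⊂ ℝⁿ with inradius r and every Λ > π²/(4r²): Tr(−Δ_Ω − Λ)₋^σ ≤ L^cl_{σ,n} |Ω| Λ^{σ+n/2} − C L^cl_{σ,n−1} |∂Ω| Λ^{σ+(n−1)/2}. Then for every bounded convex domain Ω ⊂ ℝⁿ with inradius r: C ≤ (π/(2r)) · (L^cl_{σ,n} |Ω|)/(L^cl_{σ,n−1} |∂Ω|). -/

import Mathlib

open MeasureTheory Real Filter RealInnerProductSpace

noncomputable section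

variable {E : Type*} [NormedAddCommGroup E] [NormedSpace ℝ E] [MeasureSpace E]

/-- The Rayleigh quotient of a test function. -/
def rayleighQuotient (f : E → ℝ) : ℝ :=
  (∫ x, ‖fderiv ℝ f x‖ ^ 2) / ∫ x, (f x) ^ 2

/-- The `k`-th Dirichlet eigenvalue of `-Δ` on `Ω` (indexed from `k = 0`, so that
`dirichletEigenvalue Ω 0 = λ₁(Ω)`), defined via the Courant–Fischer min–max principle over
smooth compactly supported test functions supported in `Ω` (a form core for `H¹₀(Ω)`). -/
def dirichletEigenvalue (Ω : Set E) (k : ℕ) : ℝ :=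
  sInf { c : ℝ | ∃ V : Submodule ℝ (E → ℝ), Module.finrank ℝ V = k + 1 ∧
    (∀ f ∈ V, ContDiff ℝ (⊤ : ℕ∞) f ∧ HasCompactSupport f ∧ tsupport f ⊆ Ω) ∧
    ∀ f ∈ V, f ≠ 0 → rayleighQuotient f ≤ c }

/-- The Riesz mean `Tr(-Δ_Ω - Λ)₋^σ = Σ_k (Λ - λ_k(Ω))₊^σ`. -/
def rieszMean (σ : ℝ) (Ω : Set E) (Λ : ℝ) : ℝ :=
  ∑' k : ℕ, (max (Λ - dirichletEigenvalue Ω k) 0) ^ σ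

/-- The semiclassical Lieb–Thirring constant `L^cl_{σ,m}`. -/
def LTconst (σ : ℝ) (m : ℕ) : ℝ :=
  Real.Gamma (σ + 1) / ((4 * π) ^ ((m : ℝ) / 2) * Real.Gamma (σ + 1 + (m : ℝ) / 2))

/-- The inradius `r = sup_{x ∈ Ω} dist(x, ∂Ω)`. -/
def inradius (Ω : Set E) : ℝ := ⨆ x ∈ Ω, Metric.infDist x (frontier Ω)

/-- The inner parallel set `Ω_t = {x ∈ Ω : dist(x, Ωᶜ) ≥ t}`. -/
def innerParallel (Ω : Set E) (t : ℝ) : Set E := {x ∈ Ω | t ≤ Metric.infDist x Ωᶜ}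

/-- `m`-dimensional surface measure (Hausdorff measure). -/
def surfaceArea [BorelSpace E] (m : ℕ) (S : Set E) : ℝ := (μH[(m : ℝ)] S).toReal


section AuxGeometry
open Set Metric
open scoped ENNReal NNReal
set_option maxHeartbeats 1000000


/-- If `q` expands distances on `A` at most by factor `K` backwards (i.e. the inverse of `q` on
`q '' A` is `K`-Lipschitz), then the Hausdorff measure of `A` is controlled by that of `q '' A`. -/
lemma hausdorff_le_of_antilip {X Y : Type*} [MetricSpace X] [MeasurableSpace X] [BorelSpace X]
    [MetricSpace Y] [MeasurableSpace Y] [BorelSpace Y]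
    (q : X → Y) (A : Set X) (K : ℝ≥0)
    (hK : ∀ x ∈ A, ∀ y ∈ A, dist x y ≤ K * dist (q x) (q y)) {d : ℝ} (hd : 0 ≤ d) :
    μH[d] A ≤ (K : ℝ≥0∞) ^ d * μH[d] (q '' A) := by
  classical
  rcases A.eq_empty_or_nonempty with rfl | ⟨x₀, hx₀⟩
  · simp
  set h : Y → X := fun z => if hz : ∃ x ∈ A, q x = z then hz.choose else x₀ with hh
  have hmem : ∀ z ∈ q '' A, h z ∈ A ∧ q (h z) = z := by
    intro z hz
    obtain ⟨x, hx, rfl⟩ := hz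
    have hz' : ∃ x' ∈ A, q x' = q x := ⟨x, hx, rfl⟩
    simp only [hh, dif_pos hz']
    exact ⟨hz'.choose_spec.1, hz'.choose_spec.2⟩
  have hlip : LipschitzOnWith K h (q '' A) := by
    rw [lipschitzOnWith_iff_dist_le_mul]
    intro z hz w hw
    obtain ⟨hz1, hz2⟩ := hmem z hz
    obtain ⟨hw1, hw2⟩ := hmem w hw
    have := hK _ hz1 _ hw1
    rwa [hz2, hw2] at this
  have hsub : A ⊆ h '' (q '' A) := by
    intro x hx
    refine ⟨q x, ⟨x, hx, rfl⟩, ?_⟩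
    obtain ⟨h1, h2⟩ := hmem (q x) ⟨x, hx, rfl⟩
    have hd0 : dist (h (q x)) x ≤ K * dist (q (h (q x))) (q x) := hK _ h1 _ hx
    rw [h2] at hd0
    simp only [dist_self, mul_zero] at hd0
    exact (dist_le_zero.mp hd0)
  calc μH[d] A ≤ μH[d] (h '' (q '' A)) := measure_mono hsub
    _ ≤ (K : ℝ≥0∞) ^ d * μH[d] (q '' A) := hlip.hausdorffMeasure_image_le hd


lemma euc_dist_sq {N : ℕ} (x y : EuclideanSpace ℝ (Fin N)) :
    dist x y ^ 2 = ∑ i, (x i - y i) ^ 2 := by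
  rw [EuclideanSpace.dist_eq, Real.sq_sqrt (by positivity)]
  congr 1; ext i; rw [Real.dist_eq, sq_abs]

lemma euc_norm_sq {N : ℕ} (x : EuclideanSpace ℝ (Fin N)) :
    ‖x‖ ^ 2 = ∑ i, (x i) ^ 2 := by
  rw [EuclideanSpace.norm_eq, Real.sq_sqrt (by positivity)]
  congr 1; ext i; rw [Real.norm_eq_abs, sq_abs]

/-- Hausdorff measure μH[m] on `EuclideanSpace ℝ (Fin m)` is Haar. -/
lemma euc_haar (m : ℕ) :
    (μH[(m : ℝ)] : Measure (EuclideanSpace ℝ (Fin m)))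
      = μH[(Module.finrank ℝ (EuclideanSpace ℝ (Fin m)) : ℝ)] := by
  rw [finrank_euclideanSpace, Fintype.card_fin]

lemma euc_closedBall_lt_top (m : ℕ) (x : EuclideanSpace ℝ (Fin m)) (r : ℝ) :
    μH[(m : ℝ)] (Metric.closedBall x r) < ⊤ := by
  rw [euc_haar]
  exact (isCompact_closedBall x r).measure_lt_top

lemma euc_ball_pos (m : ℕ) (x : EuclideanSpace ℝ (Fin m)) {r : ℝ} (hr : 0 < r) :
    0 < μH[(m : ℝ)] (Metric.ball x r) := by
  rw [euc_haar]
  exact (Metric.isOpen_ball).measure_pos _ (Metric.nonempty_ball.mpr hr)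


/-- Drop the `i`-th coordinate. -/
def projAway {m : ℕ} (i : Fin (m + 1)) (x : EuclideanSpace ℝ (Fin (m + 1))) :
    EuclideanSpace ℝ (Fin m) := WithLp.toLp 2 (fun j => x (i.succAbove j))

lemma sphere_piece_antilip {m : ℕ} (i : Fin (m + 1)) :
    ∀ x ∈ {x : EuclideanSpace ℝ (Fin (m+1)) |
        ‖x‖ = 1 ∧ 1 / Real.sqrt (m+1) ≤ x i},
      ∀ y ∈ {x : EuclideanSpace ℝ (Fin (m+1)) |
        ‖x‖ = 1 ∧ 1 / Real.sqrt (m+1) ≤ x i},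
      dist x y ≤ ((m:ℝ) + 2) * dist (projAway i x) (projAway i y) := by
  intro x hx y hy
  obtain ⟨hx1, hxc⟩ := hx
  obtain ⟨hy1, hyc⟩ := hy
  set c : ℝ := 1 / Real.sqrt (m+1) with hc
  have hm1 : (0:ℝ) < (m:ℝ) + 1 := by positivity
  have hcpos : 0 < c := by
    rw [hc]; positivity
  have hc2 : c ^ 2 = 1 / ((m:ℝ) + 1) := by
    rw [hc, div_pow, one_pow, Real.sq_sqrt hm1.le]
  set qx : EuclideanSpace ℝ (Fin m) := projAway i x with hqx
  set qy : EuclideanSpace ℝ (Fin m) := projAway i y with hqy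
  -- decompositions
  have hsplitx : x i ^ 2 + ‖qx‖ ^ 2 = 1 := by
    have := euc_norm_sq x
    rw [hx1, one_pow] at this
    rw [euc_norm_sq]
    rw [Fin.sum_univ_succAbove (fun k => x k ^ 2) i] at this
    simpa [hqx, projAway] using this.symm
  have hsplity : y i ^ 2 + ‖qy‖ ^ 2 = 1 := by
    have := euc_norm_sq y
    rw [hy1, one_pow] at this
    rw [euc_norm_sq]
    rw [Fin.sum_univ_succAbove (fun k => y k ^ 2) i] at this
    simpa [hqy, projAway] using this.symm
  have hdistsplit : dist x y ^ 2 = (x i - y i) ^ 2 + dist qx qy ^ 2 := by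
    rw [euc_dist_sq, euc_dist_sq, Fin.sum_univ_succAbove (fun k => (x k - y k) ^ 2) i]
    simp [hqx, hqy, projAway]
  -- bounds
  have hqxnorm : ‖qx‖ ≤ 1 := by
    nlinarith [sq_nonneg (x i), norm_nonneg qx, sq_nonneg (‖qx‖ - 1), hcpos.le.trans hxc]
  have hqynorm : ‖qy‖ ≤ 1 := by
    nlinarith [sq_nonneg (y i), norm_nonneg qy, sq_nonneg (‖qy‖ - 1), hcpos.le.trans hyc]
  have hnd : |‖qx‖ - ‖qy‖| ≤ dist qx qy := abs_norm_sub_norm_le _ _ |>.trans_eq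
    (by rw [dist_eq_norm])
  -- |x i - y i| ≤ sqrt(m+1) * dist qx qy
  have hsum : 2 * c ≤ x i + y i := by linarith
  have hdiff : (x i - y i) * (x i + y i) = ‖qy‖ ^ 2 - ‖qx‖ ^ 2 := by nlinarith
  have hkey : (x i - y i) ^ 2 ≤ ((m:ℝ) + 1) * dist qx qy ^ 2 := by
    have hnd' : |‖qy‖ - ‖qx‖| ≤ dist qx qy := by rw [abs_sub_comm]; exact hnd
    have hb : |‖qy‖ + ‖qx‖| ≤ 2 := by
      rw [abs_of_nonneg (by positivity)]; linarith
    have h2 : |‖qy‖ ^ 2 - ‖qx‖ ^ 2| ≤ dist qx qy * 2 := by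
      have heq : ‖qy‖ ^ 2 - ‖qx‖ ^ 2 = (‖qy‖ - ‖qx‖) * (‖qy‖ + ‖qx‖) := by ring
      rw [heq, abs_mul]
      exact mul_le_mul hnd' hb (abs_nonneg _) dist_nonneg
    have h2' := abs_le.mp h2
    have h1 : ((x i - y i) * (x i + y i)) ^ 2 ≤ (dist qx qy * 2) ^ 2 := by
      rw [hdiff]
      exact sq_le_sq' h2'.1 h2'.2
    have h3 : (2 * c) ^ 2 ≤ (x i + y i) ^ 2 := by
      apply pow_le_pow_left₀ (by positivity) hsum
    have h4 : (x i - y i) ^ 2 * (2 * c) ^ 2 ≤ (dist qx qy * 2) ^ 2 := by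
      calc (x i - y i) ^ 2 * (2 * c) ^ 2
          ≤ (x i - y i) ^ 2 * (x i + y i) ^ 2 :=
            mul_le_mul_of_nonneg_left h3 (sq_nonneg _)
        _ = ((x i - y i) * (x i + y i)) ^ 2 := by ring
        _ ≤ (dist qx qy * 2) ^ 2 := h1
    have hc2' : (2 * c) ^ 2 = 4 / ((m:ℝ) + 1) := by rw [mul_pow, hc2]; ring
    rw [hc2'] at h4
    rw [mul_div_assoc'] at h4
    have h5 := (div_le_iff₀ hm1).mp h4
    have h6 : (dist qx qy * 2) ^ 2 * ((m:ℝ) + 1) = 4 * (((m:ℝ) + 1) * dist qx qy ^ 2) := by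
      ring
    rw [h6] at h5
    linarith
  -- combine
  have hfin : dist x y ^ 2 ≤ (((m:ℝ) + 2) * dist qx qy) ^ 2 := by
    have hm0 : (0:ℝ) ≤ (m:ℝ) := Nat.cast_nonneg m
    have hD : (0:ℝ) ≤ dist qx qy ^ 2 := sq_nonneg _
    have e1 : dist x y ^ 2 ≤ ((m:ℝ) + 2) * dist qx qy ^ 2 := by
      rw [hdistsplit]; linarith
    have e3 : ((m:ℝ) + 2) * dist qx qy ^ 2 ≤ (((m:ℝ) + 2) ^ 2) * dist qx qy ^ 2 := by
      apply mul_le_mul_of_nonneg_right _ hD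
      nlinarith [hm0]
    have e2 : (((m:ℝ) + 2) * dist qx qy) ^ 2 = (((m:ℝ) + 2) ^ 2) * dist qx qy ^ 2 := by ring
    rw [e2]
    linarith
  have hs := Real.sqrt_le_sqrt hfin
  rw [Real.sqrt_sq dist_nonneg, Real.sqrt_sq (by positivity : (0:ℝ) ≤ ((m:ℝ) + 2) * dist qx qy)] at hs
  exact hs


lemma projAway_norm_sq {m : ℕ} (i : Fin (m + 1)) (x : EuclideanSpace ℝ (Fin (m + 1))) :
    x i ^ 2 + ‖projAway i x‖ ^ 2 = ‖x‖ ^ 2 := by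
  rw [euc_norm_sq, euc_norm_sq, Fin.sum_univ_succAbove (fun k => x k ^ 2) i]
  simp [projAway]

lemma sphere_piece_lt_top {m : ℕ} (i : Fin (m + 1)) :
    μH[(m:ℝ)] {x : EuclideanSpace ℝ (Fin (m+1)) |
      ‖x‖ = 1 ∧ 1 / Real.sqrt (m+1) ≤ x i} < ⊤ := by
  set A := {x : EuclideanSpace ℝ (Fin (m+1)) | ‖x‖ = 1 ∧ 1 / Real.sqrt (m+1) ≤ x i} with hA
  set K : ℝ≥0 := (m : ℝ≥0) + 2 with hK
  have hKcoe : ((K : ℝ≥0∞) : ℝ≥0∞) ≠ ⊤ := ENNReal.coe_ne_top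
  have hmain : μH[(m:ℝ)] A ≤ (K : ℝ≥0∞) ^ (m:ℝ) * μH[(m:ℝ)] (projAway i '' A) := by
    apply hausdorff_le_of_antilip (projAway i) A K _ (by positivity)
    intro x hx y hy
    have := sphere_piece_antilip i x hx y hy
    have hKc : (K : ℝ) = (m : ℝ) + 2 := by rw [hK]; push_cast; ring
    rw [hKc]
    exact this
  have himg : projAway i '' A ⊆ Metric.closedBall (0 : EuclideanSpace ℝ (Fin m)) 1 := by
    rintro _ ⟨x, hx, rfl⟩
    rw [Metric.mem_closedBall, dist_zero_right]
    have h1 := projAway_norm_sq i x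
    rw [hx.1, one_pow] at h1
    nlinarith [norm_nonneg (projAway i x), sq_nonneg (‖projAway i x‖ - 1),
      sq_nonneg (x i)]
  calc μH[(m:ℝ)] A ≤ (K : ℝ≥0∞) ^ (m:ℝ) * μH[(m:ℝ)] (projAway i '' A) := hmain
    _ ≤ (K : ℝ≥0∞) ^ (m:ℝ) * μH[(m:ℝ)] (Metric.closedBall (0 : EuclideanSpace ℝ (Fin m)) 1) :=
        mul_le_mul_right (measure_mono himg) _
    _ < ⊤ := ENNReal.mul_lt_top
        (ENNReal.rpow_lt_top_of_nonneg (by positivity) hKcoe).ne.lt_top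
        (euc_closedBall_lt_top m 0 1)

lemma sphere_hausdorff_lt_top (m : ℕ) :
    μH[(m:ℝ)] (Metric.sphere (0 : EuclideanSpace ℝ (Fin (m+1))) 1) < ⊤ := by
  set c : ℝ := 1 / Real.sqrt (m+1) with hc
  set Apos : Fin (m+1) → Set (EuclideanSpace ℝ (Fin (m+1))) :=
    fun i => {x | ‖x‖ = 1 ∧ c ≤ x i} with hApos
  set Aneg : Fin (m+1) → Set (EuclideanSpace ℝ (Fin (m+1))) :=
    fun i => {x | ‖x‖ = 1 ∧ c ≤ -x i} with hAneg
  have hm1 : (0:ℝ) < (m:ℝ) + 1 := by positivity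
  have hcover : Metric.sphere (0 : EuclideanSpace ℝ (Fin (m+1))) 1 ⊆
      ⋃ i : Fin (m+1), (Apos i ∪ Aneg i) := by
    intro x hx
    rw [mem_sphere_zero_iff_norm] at hx
    have hex : ∃ i, 1 / ((m:ℝ)+1) ≤ x i ^ 2 := by
      by_contra hcon
      push_neg at hcon
      have hsum : ∑ i, x i ^ 2 < ∑ _i : Fin (m+1), 1 / ((m:ℝ)+1) :=
        Finset.sum_lt_sum_of_nonempty Finset.univ_nonempty (fun i _ => hcon i)
      rw [Finset.sum_const, Finset.card_univ, Fintype.card_fin, nsmul_eq_mul] at hsum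
      have : ((m:ℝ)+1) * (1 / ((m:ℝ)+1)) = 1 := by field_simp
      rw [show ((m+1 : ℕ) : ℝ) = (m:ℝ)+1 by push_cast; ring, this] at hsum
      rw [← euc_norm_sq, hx, one_pow] at hsum
      exact lt_irrefl _ hsum
    obtain ⟨i, hi⟩ := hex
    have habs : c ≤ |x i| := by
      have h1 : Real.sqrt (1 / ((m:ℝ)+1)) ≤ Real.sqrt (x i ^ 2) := Real.sqrt_le_sqrt hi
      rw [Real.sqrt_sq_eq_abs] at h1
      rw [hc]
      have : Real.sqrt (1 / ((m:ℝ)+1)) = 1 / Real.sqrt ((m:ℝ)+1) := by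
        rw [one_div, one_div, Real.sqrt_inv]
      rw [this] at h1
      exact h1
    refine mem_iUnion.mpr ⟨i, ?_⟩
    rcases abs_cases (x i) with ⟨heq, _⟩ | ⟨heq, _⟩
    · exact Or.inl ⟨hx, heq ▸ habs⟩
    · exact Or.inr ⟨hx, by rw [heq] at habs; exact habs⟩
  have hneg : ∀ i, μH[(m:ℝ)] (Aneg i) < ⊤ := by
    intro i
    have hpre : Aneg i = (fun x : EuclideanSpace ℝ (Fin (m+1)) => -x) ⁻¹' (Apos i) := by
      ext x
      simp only [hAneg, hApos, mem_setOf_eq, mem_preimage, norm_neg]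
      constructor
      · rintro ⟨h1, h2⟩; exact ⟨h1, by simpa using h2⟩
      · rintro ⟨h1, h2⟩; exact ⟨h1, by simpa using h2⟩
    rw [hpre, Isometry.hausdorffMeasure_preimage isometry_neg
      (Or.inr neg_surjective) (Apos i), neg_surjective.range_eq, inter_univ]
    exact sphere_piece_lt_top i
  calc μH[(m:ℝ)] (Metric.sphere (0 : EuclideanSpace ℝ (Fin (m+1))) 1)
      ≤ μH[(m:ℝ)] (⋃ i : Fin (m+1), (Apos i ∪ Aneg i)) := measure_mono hcover
    _ ≤ ∑ i : Fin (m+1), μH[(m:ℝ)] (Apos i ∪ Aneg i) := measure_iUnion_fintype_le _ _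
    _ < ⊤ := by
        apply ENNReal.sum_lt_top.mpr
        intro i _
        calc μH[(m:ℝ)] (Apos i ∪ Aneg i) ≤ μH[(m:ℝ)] (Apos i) + μH[(m:ℝ)] (Aneg i) :=
              measure_union_le _ _
          _ < ⊤ := ENNReal.add_lt_top.mpr ⟨sphere_piece_lt_top i, hneg i⟩


/-- Finiteness of the Hausdorff measure of the frontier, centered version. -/
lemma frontier_lt_top_centered {m : ℕ} (Ω : Set (EuclideanSpace ℝ (Fin (m+1))))
    (hO : IsOpen Ω) (hconv : Convex ℝ Ω) {ρ R : ℝ} (hρ : 0 < ρ)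
    (hball : Metric.ball 0 ρ ⊆ Ω) (hR : 0 < R) (hsub : Ω ⊆ Metric.closedBall 0 R) :
    μH[(m:ℝ)] (frontier Ω) < ⊤ := by
  have h0 : (0 : EuclideanSpace ℝ (Fin (m+1))) ∈ Ω := hball (Metric.mem_ball_self hρ)
  have hnhds : Ω ∈ nhds 0 := hO.mem_nhds h0
  have habs : Absorbent ℝ Ω := absorbent_nhds_zero hnhds
  have hg1 : ∀ x : EuclideanSpace ℝ (Fin (m+1)), ‖x‖ / R ≤ gauge Ω x :=
    fun x => le_gauge_of_subset_closedBall habs hR.le hsub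
  have hg2 : ∀ x : EuclideanSpace ℝ (Fin (m+1)), ρ * gauge Ω x ≤ ‖x‖ :=
    fun x => mul_gauge_le_norm hball
  have hglip : LipschitzWith (⟨ρ, hρ.le⟩ : ℝ≥0)⁻¹ (gauge Ω) :=
    hconv.lipschitzWith_gauge (by exact_mod_cast hρ) hball
  have hglip' : ∀ u v : EuclideanSpace ℝ (Fin (m+1)),
      |gauge Ω u - gauge Ω v| ≤ ρ⁻¹ * ‖u - v‖ := by
    intro u v
    have := hglip.dist_le_mul u v
    rw [Real.dist_eq, dist_eq_norm] at this
    exact this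
  set f : EuclideanSpace ℝ (Fin (m+1)) → EuclideanSpace ℝ (Fin (m+1)) :=
    fun x => (gauge Ω x)⁻¹ • x with hf
  have hfront : frontier Ω ⊆ f '' Metric.sphere 0 1 := by
    intro x hx
    have hgx : gauge Ω x = 1 := (gauge_eq_one_iff_mem_frontier hconv hnhds).mpr hx
    have hxn : ρ ≤ ‖x‖ := by have := hg2 x; rw [hgx, mul_one] at this; exact this
    have hx0 : ‖x‖ ≠ 0 := (hρ.trans_le hxn).ne'
    refine ⟨‖x‖⁻¹ • x, ?_, ?_⟩
    · rw [mem_sphere_zero_iff_norm, norm_smul, norm_inv, norm_norm, inv_mul_cancel₀ hx0]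
    · have hgs : gauge Ω (‖x‖⁻¹ • x) = ‖x‖⁻¹ * gauge Ω x := by
        rw [gauge_smul_of_nonneg (inv_nonneg.mpr (norm_nonneg x)), smul_eq_mul]
      rw [hf]
      simp only
      rw [hgs, hgx, mul_one, inv_inv, smul_smul, mul_inv_cancel₀ hx0, one_smul]
  have hKnn : (0:ℝ) ≤ R + R ^ 2 / ρ := by positivity
  have hflip : LipschitzOnWith (R + R ^ 2 / ρ).toNNReal f (Metric.sphere 0 1) := by
    rw [lipschitzOnWith_iff_dist_le_mul]
    intro u hu v hv
    rw [mem_sphere_zero_iff_norm] at hu hv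
    have hgu1 : 1 / R ≤ gauge Ω u := by have := hg1 u; rwa [hu] at this
    have hgv1 : 1 / R ≤ gauge Ω v := by have := hg1 v; rwa [hv] at this
    have hgupos : 0 < gauge Ω u := lt_of_lt_of_le (by positivity) hgu1
    have hgvpos : 0 < gauge Ω v := lt_of_lt_of_le (by positivity) hgv1
    have hguR : (gauge Ω u)⁻¹ ≤ R := by
      rw [inv_le_comm₀ hgupos hR]
      rwa [one_div] at hgu1
    have hgvR : (gauge Ω v)⁻¹ ≤ R := by
      rw [inv_le_comm₀ hgvpos hR]
      rwa [one_div] at hgv1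
    have hsplit : f u - f v = (gauge Ω u)⁻¹ • (u - v) +
        ((gauge Ω u)⁻¹ - (gauge Ω v)⁻¹) • v := by
      rw [hf]; simp only
      rw [smul_sub, sub_smul]; abel
    rw [dist_eq_norm, hsplit]
    have hterm1 : ‖(gauge Ω u)⁻¹ • (u - v)‖ ≤ R * ‖u - v‖ := by
      rw [norm_smul, Real.norm_eq_abs, abs_of_nonneg (inv_nonneg.mpr hgupos.le)]
      exact mul_le_mul_of_nonneg_right hguR (norm_nonneg _)
    have hterm2 : ‖((gauge Ω u)⁻¹ - (gauge Ω v)⁻¹) • v‖ ≤ R ^ 2 / ρ * ‖u - v‖ := by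
      rw [norm_smul, Real.norm_eq_abs, hv, mul_one]
      have heq : (gauge Ω u)⁻¹ - (gauge Ω v)⁻¹ =
          (gauge Ω v - gauge Ω u) * ((gauge Ω u) * (gauge Ω v))⁻¹ := by
        field_simp
      rw [heq, abs_mul]
      have h1 : |gauge Ω v - gauge Ω u| ≤ ρ⁻¹ * ‖u - v‖ := by
        rw [abs_sub_comm]; exact hglip' u v
      have h2 : |((gauge Ω u) * (gauge Ω v))⁻¹| ≤ R ^ 2 := by
        rw [abs_of_nonneg (by positivity), mul_inv]
        calc (gauge Ω u)⁻¹ * (gauge Ω v)⁻¹ ≤ R * R :=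
              mul_le_mul hguR hgvR (inv_nonneg.mpr hgvpos.le) hR.le
          _ = R ^ 2 := by ring
      calc |gauge Ω v - gauge Ω u| * |((gauge Ω u) * (gauge Ω v))⁻¹|
          ≤ (ρ⁻¹ * ‖u - v‖) * R ^ 2 :=
            mul_le_mul h1 h2 (abs_nonneg _) (by positivity)
        _ = R ^ 2 / ρ * ‖u - v‖ := by ring
    calc ‖(gauge Ω u)⁻¹ • (u - v) + ((gauge Ω u)⁻¹ - (gauge Ω v)⁻¹) • v‖
        ≤ ‖(gauge Ω u)⁻¹ • (u - v)‖ + ‖((gauge Ω u)⁻¹ - (gauge Ω v)⁻¹) • v‖ :=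
          norm_add_le _ _
      _ ≤ R * ‖u - v‖ + R ^ 2 / ρ * ‖u - v‖ := add_le_add hterm1 hterm2
      _ = (R + R ^ 2 / ρ) * ‖u - v‖ := by ring
      _ = ((R + R ^ 2 / ρ).toNNReal : ℝ) * dist u v := by
          rw [Real.coe_toNNReal _ hKnn, dist_eq_norm]
  calc μH[(m:ℝ)] (frontier Ω) ≤ μH[(m:ℝ)] (f '' Metric.sphere 0 1) := measure_mono hfront
    _ ≤ ((R + R ^ 2 / ρ).toNNReal : ℝ≥0∞) ^ (m:ℝ) * μH[(m:ℝ)] (Metric.sphere 0 1) :=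
        hflip.hausdorffMeasure_image_le (by positivity)
    _ < ⊤ := ENNReal.mul_lt_top
        (ENNReal.rpow_lt_top_of_nonneg (by positivity) ENNReal.coe_ne_top)
        (sphere_hausdorff_lt_top m)


lemma projAway_lipschitz {m : ℕ} (i : Fin (m + 1)) :
    LipschitzWith 1 (projAway i) := by
  rw [lipschitzWith_iff_dist_le_mul]
  intro x y
  rw [NNReal.coe_one, one_mul]
  have hsq : dist (projAway i x) (projAway i y) ^ 2 ≤ dist x y ^ 2 := by
    rw [euc_dist_sq, euc_dist_sq, Fin.sum_univ_succAbove (fun k => (x k - y k) ^ 2) i]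
    have : ∑ j : Fin m, (projAway i x j - projAway i y j) ^ 2
        = ∑ j : Fin m, (x (i.succAbove j) - y (i.succAbove j)) ^ 2 := by
      simp [projAway]
    rw [this]
    nlinarith [sq_nonneg (x i - y i)]
  have := Real.sqrt_le_sqrt hsq
  rwa [Real.sqrt_sq dist_nonneg, Real.sqrt_sq dist_nonneg] at this

/-- Positivity of the Hausdorff measure of the frontier, centered version. -/
lemma frontier_pos_centered {m : ℕ} (Ω : Set (EuclideanSpace ℝ (Fin (m+1))))
    (hO : IsOpen Ω) (hbd : Bornology.IsBounded Ω) {ρ : ℝ} (hρ : 0 < ρ)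
    (hball : Metric.ball 0 ρ ⊆ Ω) :
    0 < μH[(m:ℝ)] (frontier Ω) := by
  set p := projAway (Fin.last m) with hp
  -- the ball in the hyperplane is inside the projection of Ω
  have hlift : Metric.ball (0 : EuclideanSpace ℝ (Fin m)) ρ ⊆ p '' Ω := by
    intro z hz
    rw [mem_ball_zero_iff] at hz
    set w : EuclideanSpace ℝ (Fin (m+1)) :=
      WithLp.toLp 2 (Fin.snoc (α := fun _ => ℝ) (fun k => z k) (0:ℝ)) with hw
    have hcs : ∀ j : Fin m, w (Fin.castSucc j) = z j :=
      fun j => Fin.snoc_castSucc (α := fun _ => ℝ) (p := fun k => z k) (x := (0:ℝ)) (i := j)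
    have hlast : w (Fin.last m) = 0 :=
      Fin.snoc_last (α := fun _ => ℝ) (p := fun k => z k) (x := (0:ℝ))
    have hwnorm : ‖w‖ = ‖z‖ := by
      have h1 : ‖w‖ ^ 2 = ‖z‖ ^ 2 := by
        rw [euc_norm_sq, euc_norm_sq,
          Fin.sum_univ_succAbove (fun k => w k ^ 2) (Fin.last m),
          Fin.succAbove_last, hlast]
        simp only [hcs]
        ring
      have := congrArg Real.sqrt h1
      rwa [Real.sqrt_sq (norm_nonneg _), Real.sqrt_sq (norm_nonneg _)] at this
    have hwball : w ∈ Metric.ball (0 : EuclideanSpace ℝ (Fin (m+1))) ρ := by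
      rw [mem_ball_zero_iff, hwnorm]; exact hz
    refine ⟨w, hball hwball, ?_⟩
    ext j
    show w ((Fin.last m).succAbove j) = z j
    rw [Fin.succAbove_last]
    exact hcs j
  -- every point of Ω projects to a frontier point with the same projection
  have hPF : p '' Ω ⊆ p '' (frontier Ω) := by
    rintro _ ⟨x, hx, rfl⟩
    set e : EuclideanSpace ℝ (Fin (m+1)) := EuclideanSpace.single (Fin.last m) (1:ℝ) with he
    have hne : ‖e‖ = 1 := by rw [he, EuclideanSpace.norm_single, norm_one]
    set T : Set ℝ := {t : ℝ | x + t • e ∈ Ω} with hT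
    have hT0 : (0:ℝ) ∈ T := by simp [hT, hx]
    obtain ⟨R₀, hR₀⟩ := hbd.subset_closedBall 0
    have hbdd : BddAbove T := by
      refine ⟨R₀ + ‖x‖, fun t ht => ?_⟩
      have h1 : ‖x + t • e‖ ≤ R₀ := by
        have := hR₀ ht
        rwa [Metric.mem_closedBall, dist_zero_right] at this
      have h2 : |t| = ‖t • e‖ := by rw [norm_smul, Real.norm_eq_abs, hne, mul_one]
      have h3 : ‖t • e‖ ≤ ‖x + t • e‖ + ‖x‖ := by
        have := norm_add_le (x + t • e) (-x)
        simpa using this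
      calc t ≤ |t| := le_abs_self t
        _ ≤ R₀ + ‖x‖ := by rw [h2]; linarith
    set t₀ := sSup T with ht₀
    set z := x + t₀ • e with hz
    have hφ : Continuous fun t : ℝ => x + t • e := by
      exact continuous_const.add (continuous_id.smul continuous_const)
    have hzc : z ∈ closure Ω := by
      have hmem : t₀ ∈ closure T := (isLUB_csSup ⟨0, hT0⟩ hbdd).mem_closure ⟨0, hT0⟩
      have himg : (fun t : ℝ => x + t • e) '' closure T ⊆ closure Ω := by
        refine (image_closure_subset_closure_image hφ).trans (closure_mono ?_)
        rintro _ ⟨t, ht, rfl⟩; exact ht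
      exact himg ⟨t₀, hmem, rfl⟩
    have hznot : z ∉ Ω := by
      intro hzin
      obtain ⟨ε, hε, hball'⟩ := Metric.isOpen_iff.mp hO z hzin
      have hmem : t₀ + ε/2 ∈ T := by
        show x + (t₀ + ε/2) • e ∈ Ω
        apply hball'
        rw [Metric.mem_ball, dist_eq_norm]
        have : x + (t₀ + ε/2) • e - z = (ε/2) • e := by
          rw [hz, add_smul]; abel
        rw [this, norm_smul, Real.norm_eq_abs, hne, mul_one, abs_of_pos (by linarith)]
        linarith
      have := le_csSup hbdd hmem
      linarith
    have hzf : z ∈ frontier Ω := by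
      rw [hO.frontier_eq]; exact ⟨hzc, hznot⟩
    refine ⟨z, hzf, ?_⟩
    ext j
    show z ((Fin.last m).succAbove j) = x ((Fin.last m).succAbove j)
    rw [Fin.succAbove_last]
    have : z (Fin.castSucc j) = x (Fin.castSucc j) + t₀ * e (Fin.castSucc j) := by
      rw [hz]; simp [PiLp.add_apply, PiLp.smul_apply, smul_eq_mul]
    rw [this, he, EuclideanSpace.single_apply, if_neg (Fin.castSucc_lt_last j).ne, mul_zero,
      add_zero]
  have hpos : 0 < μH[(m:ℝ)] (p '' frontier Ω) :=
    lt_of_lt_of_le (euc_ball_pos m 0 hρ) (measure_mono (hlift.trans hPF))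
  have hle := (projAway_lipschitz (Fin.last m)).hausdorffMeasure_image_le
    (by positivity : (0:ℝ) ≤ (m:ℝ)) (frontier Ω)
  rw [ENNReal.coe_one, ENNReal.one_rpow, one_mul] at hle
  exact lt_of_lt_of_le hpos hle


lemma frontier_meas {m : ℕ} (Ω : Set (EuclideanSpace ℝ (Fin (m+1))))
    (hO : IsOpen Ω) (hconv : Convex ℝ Ω) (hbd : Bornology.IsBounded Ω)
    (hne : Ω.Nonempty) :
    0 < μH[(m:ℝ)] (frontier Ω) ∧ μH[(m:ℝ)] (frontier Ω) < ⊤ := by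
  obtain ⟨x₀, hx₀⟩ := hne
  obtain ⟨ρ, hρ, hball⟩ := Metric.isOpen_iff.mp hO x₀ hx₀
  set e : EuclideanSpace ℝ (Fin (m+1)) ≃ᵢ EuclideanSpace ℝ (Fin (m+1)) :=
    IsometryEquiv.addRight x₀ with he
  have heapp : ∀ y, e y = y + x₀ := fun y => rfl
  set Ω' := e ⁻¹' Ω with hΩ'
  have hO' : IsOpen Ω' := hO.preimage e.continuous
  have hconv' : Convex ℝ Ω' := by
    intro y₁ hy₁ y₂ hy₂ a b ha hb hab
    have h₁ : y₁ + x₀ ∈ Ω := hy₁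
    have h₂ : y₂ + x₀ ∈ Ω := hy₂
    have := hconv h₁ h₂ ha hb hab
    show a • y₁ + b • y₂ + x₀ ∈ Ω
    have hx : a • x₀ + b • x₀ = x₀ := by rw [← add_smul, hab, one_smul]
    have heq : a • (y₁ + x₀) + b • (y₂ + x₀) = a • y₁ + b • y₂ + (a • x₀ + b • x₀) := by
      rw [smul_add, smul_add]; abel
    rw [hx] at heq
    show a • y₁ + b • y₂ + x₀ ∈ Ω
    rw [← heq]; exact this
  have hbd' : Bornology.IsBounded Ω' := by
    have : Ω' = e.symm '' Ω := by
      rw [hΩ', ← IsometryEquiv.image_symm]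
    rw [this]
    exact (e.symm.isometry.lipschitz.isBounded_image hbd)
  have hball' : Metric.ball (0 : EuclideanSpace ℝ (Fin (m+1))) ρ ⊆ Ω' := by
    intro y hy
    show y + x₀ ∈ Ω
    apply hball
    rw [mem_ball_zero_iff] at hy
    rw [Metric.mem_ball, dist_eq_norm]
    simpa using hy
  obtain ⟨R₀, hR₀⟩ := hbd'.subset_closedBall 0
  have hsub' : Ω' ⊆ Metric.closedBall 0 (max R₀ ρ) :=
    hR₀.trans (Metric.closedBall_subset_closedBall (le_max_left _ _))
  have hRpos : 0 < max R₀ ρ := lt_of_lt_of_le hρ (le_max_right _ _)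
  have hfr : frontier Ω' = e ⁻¹' frontier Ω := (e.toHomeomorph.preimage_frontier Ω).symm
  have hmeas : μH[(m:ℝ)] (frontier Ω') = μH[(m:ℝ)] (frontier Ω) := by
    rw [hfr]
    exact e.hausdorffMeasure_preimage (m:ℝ) (frontier Ω)
  constructor
  · rw [← hmeas]
    exact frontier_pos_centered Ω' hO' hbd' hρ hball'
  · rw [← hmeas]
    exact frontier_lt_top_centered Ω' hO' hconv' hρ hball' hRpos hsub'


end AuxGeometry


section AuxAnalytic
set_option maxHeartbeats 1000000
lemma rieszMean_nonneg (σ : ℝ) (Ω : Set E) (Λ : ℝ) : 0 ≤ rieszMean σ Ω Λ :=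
  tsum_nonneg fun k => Real.rpow_nonneg (le_max_right _ _) σ

lemma LTconst_pos {σ : ℝ} (hσ : 3 / 2 ≤ σ) (m : ℕ) : 0 < LTconst σ m := by
  have h1 : 0 < Real.Gamma (σ + 1) := Real.Gamma_pos_of_pos (by linarith)
  have h2 : 0 < Real.Gamma (σ + 1 + (m : ℝ) / 2) :=
    Real.Gamma_pos_of_pos (by positivity)
  have h3 : (0:ℝ) < (4 * π) ^ ((m : ℝ) / 2) :=
    Real.rpow_pos_of_pos (by positivity) _
  exact div_pos h1 (mul_pos h3 h2)

lemma inradius_pos {m : ℕ} (Ω : Set (EuclideanSpace ℝ (Fin (m+1))))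
    (hO : IsOpen Ω) (hbd : Bornology.IsBounded Ω) (hne : Ω.Nonempty) :
    0 < inradius Ω := by
  haveI : Nontrivial (EuclideanSpace ℝ (Fin (m+1))) := by
    refine ⟨⟨EuclideanSpace.single 0 1, 0, fun h => ?_⟩⟩
    have := congrArg norm h
    rw [EuclideanSpace.norm_single, norm_zero, norm_one] at this
    exact one_ne_zero this
  haveI : PreconnectedSpace (EuclideanSpace ℝ (Fin (m+1))) :=
    ⟨(convex_univ : Convex ℝ (Set.univ : Set (EuclideanSpace ℝ (Fin (m+1))))).isPreconnected⟩
  have hnuniv : Ω ≠ Set.univ := by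
    intro h
    rw [h] at hbd
    exact NormedSpace.unbounded_univ ℝ (EuclideanSpace ℝ (Fin (m+1))) hbd
  have hfront : (frontier Ω).Nonempty := nonempty_frontier_iff.mpr ⟨hne, hnuniv⟩
  obtain ⟨x₀, hx₀⟩ := hne
  obtain ⟨z₀, hz₀⟩ := id hfront
  obtain ⟨R₀, hR₀⟩ := hbd.subset_closedBall 0
  have hx₀front : x₀ ∉ frontier Ω := by
    rw [hO.frontier_eq]; exact fun h => h.2 hx₀
  have hd : 0 < Metric.infDist x₀ (frontier Ω) :=
    (isClosed_frontier.notMem_iff_infDist_pos hfront).mp hx₀front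
  have hbddA : BddAbove (Set.range fun x =>
      ⨆ _ : x ∈ Ω, Metric.infDist x (frontier Ω)) := by
    refine ⟨max (R₀ + ‖z₀‖) 0, ?_⟩
    rintro _ ⟨x, rfl⟩
    show (⨆ _ : x ∈ Ω, Metric.infDist x (frontier Ω)) ≤ max (R₀ + ‖z₀‖) 0
    by_cases hx : x ∈ Ω
    · rw [ciSup_pos hx]
      have h1 : Metric.infDist x (frontier Ω) ≤ dist x z₀ :=
        Metric.infDist_le_dist_of_mem hz₀
      have h2 : dist x z₀ ≤ ‖x‖ + ‖z₀‖ := by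
        calc dist x z₀ ≤ dist x 0 + dist 0 z₀ := dist_triangle _ _ _
          _ = ‖x‖ + ‖z₀‖ := by rw [dist_zero_right, dist_comm, dist_zero_right]
      have h3 : ‖x‖ ≤ R₀ := by
        have := hR₀ hx
        rwa [Metric.mem_closedBall, dist_zero_right] at this
      exact le_max_of_le_left (by linarith)
    · haveI : IsEmpty (x ∈ Ω) := ⟨hx⟩
      rw [Real.iSup_of_isEmpty]
      exact le_max_right _ _
  have hle : Metric.infDist x₀ (frontier Ω) ≤ inradius Ω := by
    have := le_ciSup hbddA x₀
    rwa [ciSup_pos hx₀] at this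
  linarith

end AuxAnalytic


set_option maxHeartbeats 1000000 in
/-- Any constant `C > 0` for which the improved Berezin inequality holds for
all bounded convex domains in `ℝⁿ` satisfies, for every bounded convex domain `Ω` with
inradius `r`: `C ≤ (π/(2r)) L^cl_{σ,n} |Ω| / (L^cl_{σ,n-1} |∂Ω|)`. -/
theorem berezin_constant_upper_bound (n : ℕ) (hn : 2 ≤ n) (σ : ℝ) (hσ : 3 / 2 ≤ σ)
    (C : ℝ) (hCpos : 0 < C)
    (hC : ∀ Ω : Set (EuclideanSpace ℝ (Fin n)), IsOpen Ω → Convex ℝ Ω →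
      Bornology.IsBounded Ω → Ω.Nonempty →
      ∀ Λ : ℝ, π ^ 2 / (4 * inradius Ω ^ 2) < Λ →
        rieszMean σ Ω Λ ≤
          LTconst σ n * (volume Ω).toReal * Λ ^ (σ + (n : ℝ) / 2)
            - C * LTconst σ (n - 1) * surfaceArea (n - 1) (frontier Ω)
                * Λ ^ (σ + ((n : ℝ) - 1) / 2)) :
    ∀ Ω : Set (EuclideanSpace ℝ (Fin n)), IsOpen Ω → Convex ℝ Ω →
      Bornology.IsBounded Ω → Ω.Nonempty →
      C ≤ π / (2 * inradius Ω) *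
            (LTconst σ n * (volume Ω).toReal
              / (LTconst σ (n - 1) * surfaceArea (n - 1) (frontier Ω))) := by
  intro Ω hO hconv hbd hne
  obtain ⟨m, rfl⟩ : ∃ m, n = m + 1 := ⟨n - 1, by omega⟩
  have hm : 1 ≤ m := by omega
  -- positivity facts
  have hr : 0 < inradius Ω := inradius_pos Ω hO hbd hne
  have hπ : 0 < π := Real.pi_pos
  have hL : 0 < LTconst σ (m + 1) := LTconst_pos hσ _
  have hL' : 0 < LTconst σ (m + 1 - 1) := LTconst_pos hσ _
  have hSfacts := frontier_meas Ω hO hconv hbd hne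
  have hS : 0 < surfaceArea (m + 1 - 1) (frontier Ω) := by
    have : (m + 1 - 1 : ℕ) = m := by omega
    rw [this]
    exact ENNReal.toReal_pos hSfacts.1.ne' hSfacts.2.ne
  set r := inradius Ω with hrdef
  set L := LTconst σ (m + 1) with hLdef
  set L' := LTconst σ (m + 1 - 1) with hL'def
  set S := surfaceArea (m + 1 - 1) (frontier Ω) with hSdef
  set V := (volume Ω).toReal with hVdef
  have hV : 0 ≤ V := ENNReal.toReal_nonneg
  set A := π ^ 2 / (4 * r ^ 2) with hA
  have hApos : 0 < A := by rw [hA]; positivity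
  -- Step 2: key inequality for every Λ > A
  have key : ∀ Λ : ℝ, A < Λ → C * (L' * S) ≤ L * V * Λ ^ (1/2 : ℝ) := by
    intro Λ hΛ
    have hΛpos : 0 < Λ := hApos.trans hΛ
    have h1 := hC Ω hO hconv hbd hne Λ hΛ
    have h0 := rieszMean_nonneg σ Ω Λ
    set e2 : ℝ := σ + (((m + 1 : ℕ) : ℝ) - 1) / 2 with he2
    set e1 : ℝ := σ + ((m + 1 : ℕ) : ℝ) / 2 with he1
    have h2 : C * L' * S * Λ ^ e2 ≤ L * V * Λ ^ e1 := by linarith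
    have hmul : Λ ^ e1 = Λ ^ e2 * Λ ^ (1/2 : ℝ) := by
      rw [← Real.rpow_add hΛpos]
      congr 1
      rw [he1, he2]; ring
    rw [hmul, show L * V * (Λ ^ e2 * Λ ^ (1/2 : ℝ)) = (L * V * Λ ^ (1/2 : ℝ)) * Λ ^ e2
      from by ring] at h2
    have hpow : 0 < Λ ^ e2 := Real.rpow_pos_of_pos hΛpos _
    have h4 := le_of_mul_le_mul_right h2 hpow
    linarith [h4]
  -- Step 3: pass to the limit Λ → A⁺
  have hlim : C * (L' * S) ≤ L * V * A ^ (1/2 : ℝ) := by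
    have htend : Tendsto (fun Λ : ℝ => L * V * Λ ^ (1/2 : ℝ)) (nhdsWithin A (Set.Ioi A))
        (nhds (L * V * A ^ (1/2 : ℝ))) := by
      apply Tendsto.mono_left _ nhdsWithin_le_nhds
      exact (continuousAt_const.mul
        (Real.continuousAt_rpow_const A (1/2) (Or.inl hApos.ne'))).tendsto
    refine ge_of_tendsto htend ?_
    filter_upwards [self_mem_nhdsWithin] with Λ hΛ
    exact key Λ hΛ
  -- compute A^(1/2)
  have hAval : A ^ (1/2 : ℝ) = π / (2 * r) := by
    have h1 : A = (π / (2 * r)) ^ (2:ℕ) := by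
      rw [hA]; field_simp; ring
    rw [h1, ← Real.rpow_natCast (π / (2 * r)) 2, ← Real.rpow_mul (by positivity)]
    norm_num
  rw [hAval] at hlim
  -- Step 4: divide
  have hL'S : 0 < L' * S := mul_pos hL' hS
  have : C ≤ L * V * (π / (2 * r)) / (L' * S) := by
    rw [le_div_iff₀ hL'S]
    linarith
  calc C ≤ L * V * (π / (2 * r)) / (L' * S) := this
    _ = π / (2 * r) * (L * V / (L' * S)) := by ring


end
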